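/- Let A ∈ ℝ^{n×n} be symmetric with largest eigenvalue α₁ and smallest eigenvalue α_n, let g ∈ ℝ^n be nonzero, Δ > 0, and suppose λ_opt ≥ 0 is such that A + λ_opt·I is positive definite; set κ = (α₁ + λ_opt)/(α_n + λ_opt). Let M = [[−A, ggᵀ/Δ²], [I, −A]] and let y = (y₁; y₂) ∈ ℝ^{2n}, with y₁, y₂ ∈ ℝ^n, be a unit-norm eigenvector of M associated with the eigenvalue λ_opt. Then for every k ≥ 0, dist(y₁, K_k(g,A)) ≤ 2·‖y₁‖·((√κ − 1)/(√κ + 1))^{k+1}. -/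

import Mathlib

open Matrix

noncomputable section

/-- Euclidean 2-norm of a finitely indexed real vector. -/
def enorm {ι : Type*} [Fintype ι] (v : ι → ℝ) : ℝ := ‖(WithLp.equiv 2 (ι → ℝ)).symm v‖

/-- The Krylov subspace `K_k(g,A) = span{g, Ag, …, A^k g}`. -/
def krylov {n : ℕ} (A : Matrix (Fin n) (Fin n) ℝ) (g : Fin n → ℝ) (k : ℕ) :
    Submodule ℝ (Fin n → ℝ) :=
  Submodule.span ℝ {v | ∃ i : ℕ, i ≤ k ∧ v = (A ^ i).mulVec g}

/-- Euclidean distance from a vector to the Krylov subspace `K_k(g,A)`. -/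
def kdist {n : ℕ} (A : Matrix (Fin n) (Fin n) ℝ) (g : Fin n → ℝ) (k : ℕ)
    (v : Fin n → ℝ) : ℝ :=
  sInf {r : ℝ | ∃ w ∈ krylov A g k, r = _root_.enorm (v - w)}



open Polynomial


lemma natDegree_cheb_le : ∀ m : ℕ, (Polynomial.Chebyshev.T ℝ (m : ℤ)).natDegree ≤ m := by
  have key : ∀ m : ℕ, (Polynomial.Chebyshev.T ℝ (m : ℤ)).natDegree ≤ m ∧
      (Polynomial.Chebyshev.T ℝ ((m+1 : ℕ) : ℤ)).natDegree ≤ m + 1 := by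
    intro m
    induction m with
    | zero =>
      constructor
      · simp [Polynomial.Chebyshev.T_zero]
      · simpa using Polynomial.natDegree_X_le (R := ℝ)
    | succ p ih =>
      refine ⟨ih.2, ?_⟩
      have h2 : ((p + 2 : ℕ) : ℤ) = (p : ℤ) + 2 := by push_cast; ring
      rw [h2, Polynomial.Chebyshev.T_add_two]
      refine le_trans (Polynomial.natDegree_sub_le _ _) ?_
      have h3 : (2 * X * Polynomial.Chebyshev.T ℝ ((p:ℤ) + 1)).natDegree ≤ p + 2 := by
        refine le_trans (Polynomial.natDegree_mul_le) ?_
        have : ((p:ℤ) + 1) = ((p+1 : ℕ) : ℤ) := by push_cast; ring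
        rw [this]
        have h4 : (2 * X : ℝ[X]).natDegree ≤ 1 :=
          le_trans (Polynomial.natDegree_mul_le) (by simp)
        omega
      have h5 : (Polynomial.Chebyshev.T ℝ (p:ℤ)).natDegree ≤ p := ih.1
      simp only [max_le_iff]
      omega
  exact fun m => (key m).1

lemma cheb_cosh (m : ℤ) (t : ℝ) :
    (Polynomial.Chebyshev.T ℝ m).eval (Real.cosh t) = Real.cosh (m * t) := by
  have h := Polynomial.Chebyshev.T_complex_cos (t * Complex.I) m
  have hmap : (Complex.ofReal ((Polynomial.Chebyshev.T ℝ m).eval (Real.cosh t)))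
      = (Polynomial.Chebyshev.T ℂ m).eval ((Real.cosh t : ℝ) : ℂ) := by
    rw [← Polynomial.Chebyshev.map_T (algebraMap ℝ ℂ) m, Polynomial.eval_map,
      show ((Real.cosh t : ℝ) : ℂ) = algebraMap ℝ ℂ (Real.cosh t) from rfl,
      Polynomial.eval₂_at_apply]
    norm_cast
  have hc : ((Real.cosh t : ℝ) : ℂ) = Complex.cos (t * Complex.I) := by
    rw [Complex.cos_mul_I, Complex.ofReal_cosh]
  have : (Complex.ofReal ((Polynomial.Chebyshev.T ℝ m).eval (Real.cosh t))) = Complex.cosh (m * t) := by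
    rw [hmap, hc, h]
    rw [show (m : ℂ) * (t * Complex.I) = ((m * t : ℝ) : ℂ) * Complex.I by push_cast; ring]
    rw [Complex.cos_mul_I]
    norm_cast
  have h2 : ((Real.cosh (m * t) : ℝ) : ℂ) = Complex.cosh (m*t) := by
    rw [Complex.ofReal_cosh]; norm_cast
  exact_mod_cast this.trans h2.symm

lemma cheb_bdd (m : ℤ) (x : ℝ) (hx : |x| ≤ 1) :
    |(Polynomial.Chebyshev.T ℝ m).eval x| ≤ 1 := by
  obtain ⟨θ, hθ⟩ : ∃ θ, Real.cos θ = x := ⟨Real.arccos x, Real.cos_arccos (by linarith [abs_le.1 hx]) (by linarith [abs_le.1 hx])⟩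
  rw [← hθ, Polynomial.Chebyshev.T_real_cos]
  exact Real.abs_cos_le_one _

lemma aeval_mulVec_eigen {n : ℕ} {A : Matrix (Fin n) (Fin n) ℝ} (hA : A.IsHermitian)
    (p : ℝ[X]) (i : Fin n) :
    (Polynomial.aeval A p) *ᵥ ⇑(hA.eigenvectorBasis i)
      = p.eval (hA.eigenvalues i) • ⇑(hA.eigenvectorBasis i) := by
  have hpow : ∀ m : ℕ, (A ^ m) *ᵥ ⇑(hA.eigenvectorBasis i)
      = hA.eigenvalues i ^ m • ⇑(hA.eigenvectorBasis i) := by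
    intro m
    induction m with
    | zero => simp [Matrix.one_mulVec]
    | succ m ih =>
      rw [pow_succ, ← Matrix.mulVec_mulVec, hA.mulVec_eigenvectorBasis,
        Matrix.mulVec_smul, ih, smul_smul, pow_succ]
      ring_nf
  induction p using Polynomial.induction_on' with
  | add p q hp hq =>
    rw [map_add, Matrix.add_mulVec, hp, hq, Polynomial.eval_add, add_smul]
  | monomial m a =>
    rw [Polynomial.aeval_monomial, Polynomial.eval_monomial]
    rw [show (algebraMap ℝ (Matrix (Fin n) (Fin n) ℝ)) a * A ^ m = a • A ^ m by
      rw [Algebra.algebraMap_eq_smul_one]; rw [smul_mul_assoc, one_mul]]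
    rw [Matrix.smul_mulVec, hpow, smul_smul]

lemma spec_bound {n : ℕ} {A : Matrix (Fin n) (Fin n) ℝ} (hA : A.IsHermitian)
    (s : ℝ[X]) (C : ℝ) (hC0 : 0 ≤ C)
    (hC : ∀ i, |s.eval (hA.eigenvalues i)| ≤ C) (v : Fin n → ℝ) :
    _root_.enorm ((Polynomial.aeval A s).mulVec v) ≤ C * _root_.enorm v := by
  set B := hA.eigenvectorBasis with hB
  set v' : EuclideanSpace ℝ (Fin n) := (WithLp.equiv 2 (Fin n → ℝ)).symm v with hv'
  set L : EuclideanSpace ℝ (Fin n) →ₗ[ℝ] EuclideanSpace ℝ (Fin n) :=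
    Matrix.toEuclideanLin (Polynomial.aeval A s) with hL
  have henorm : _root_.enorm ((Polynomial.aeval A s).mulVec v) = ‖L v'‖ := rfl
  have hLB : ∀ i, L (B i) = s.eval (hA.eigenvalues i) • B i := by
    intro i
    have := aeval_mulVec_eigen hA s i
    apply (WithLp.equiv 2 (Fin n → ℝ)).injective
    simpa [hL, Matrix.toEuclideanLin_apply] using this
  have hterm : ∀ i, L (B.repr v' i • B i)
      = (s.eval (hA.eigenvalues i) * B.repr v' i) • B i := by
    intro i
    rw [_root_.map_smul, hLB, smul_smul, mul_comm]
  have hsum : L v' = ∑ i, (s.eval (hA.eigenvalues i) * B.repr v' i) • B i := by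
    conv_lhs => rw [← B.sum_repr v']
    rw [map_sum]
    exact Finset.sum_congr rfl fun i _ => hterm i
  have hon := orthonormal_iff_ite.mp B.orthonormal
  have hrepr : ∀ j, B.repr (L v') j = s.eval (hA.eigenvalues j) * B.repr v' j := by
    intro j
    rw [B.repr_apply_apply, hsum, inner_sum]
    simp only [real_inner_smul_right, hon, mul_ite, mul_one, mul_zero,
      Finset.sum_ite_eq, Finset.mem_univ, if_true]
  have hnorm2 : ‖L v'‖ = Real.sqrt (∑ j, ‖s.eval (hA.eigenvalues j) * B.repr v' j‖ ^ 2) := by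
    rw [← B.repr.norm_map (L v'), EuclideanSpace.norm_eq]
    congr 1
    exact Finset.sum_congr rfl fun j _ => by rw [hrepr j]
  have hvnorm : ‖v'‖ = Real.sqrt (∑ j, ‖B.repr v' j‖ ^ 2) := by
    rw [← B.repr.norm_map v', EuclideanSpace.norm_eq]
  have hle : ∑ j, ‖s.eval (hA.eigenvalues j) * B.repr v' j‖ ^ 2
      ≤ C ^ 2 * ∑ j, ‖B.repr v' j‖ ^ 2 := by
    rw [Finset.mul_sum]
    refine Finset.sum_le_sum fun j _ => ?_
    rw [norm_mul, ← mul_pow]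
    have h1 : ‖s.eval (hA.eigenvalues j)‖ ≤ C := by
      simpa [Real.norm_eq_abs] using hC j
    have h2 : (0:ℝ) ≤ ‖B.repr v' j‖ := norm_nonneg _
    exact pow_le_pow_left₀ (by positivity) (mul_le_mul_of_nonneg_right h1 h2) 2
  calc _root_.enorm ((Polynomial.aeval A s).mulVec v) = ‖L v'‖ := henorm
    _ = Real.sqrt (∑ j, ‖s.eval (hA.eigenvalues j) * B.repr v' j‖ ^ 2) := hnorm2
    _ ≤ Real.sqrt (C ^ 2 * ∑ j, ‖B.repr v' j‖ ^ 2) := Real.sqrt_le_sqrt hle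
    _ = C * Real.sqrt (∑ j, ‖B.repr v' j‖ ^ 2) := by
        rw [Real.sqrt_mul (by positivity), Real.sqrt_sq hC0]
    _ = C * _root_.enorm v := by rw [← hvnorm]; rfl

lemma mem_krylov {n k : ℕ} (A : Matrix (Fin n) (Fin n) ℝ) (g : Fin n → ℝ)
    (p : ℝ[X]) (hp : p.natDegree ≤ k) :
    (Polynomial.aeval A p).mulVec g ∈ krylov A g k := by
  rw [Polynomial.aeval_eq_sum_range' (lt_of_le_of_lt hp (Nat.lt_succ_self k))]
  have hsum : (∑ i ∈ Finset.range (k+1), p.coeff i • A ^ i) *ᵥ g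
      = ∑ i ∈ Finset.range (k+1), p.coeff i • ((A ^ i) *ᵥ g) := by
    induction (Finset.range (k+1)) using Finset.induction_on with
    | empty => simp [Matrix.zero_mulVec]
    | insert _ _ hni ih =>
      rw [Finset.sum_insert hni, Finset.sum_insert hni, Matrix.add_mulVec,
        Matrix.smul_mulVec, ih]
  rw [hsum]
  refine Submodule.sum_mem _ fun i hi => ?_
  refine Submodule.smul_mem _ _ (Submodule.subset_span ?_)
  exact ⟨i, Nat.lt_succ_iff.mp (Finset.mem_range.mp hi), rfl⟩

lemma cheb_exists (a b lam : ℝ) (ha : 0 < a) (hab : a ≤ b) (m : ℕ) (hm : 1 ≤ m) :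
    ∃ s : ℝ[X], s.natDegree ≤ m ∧ s.eval (-lam) = 1 ∧
      ∀ x : ℝ, a ≤ x + lam → x + lam ≤ b →
        |s.eval x| ≤ 2 * ((Real.sqrt (b/a) - 1)/(Real.sqrt (b/a) + 1)) ^ m := by
  have hb : 0 < b := lt_of_lt_of_le ha hab
  rcases eq_or_lt_of_le hab with heq | hlt
  · -- a = b
    refine ⟨(Polynomial.C b⁻¹ * (Polynomial.C b - (X + Polynomial.C lam))) ^ m, ?_, ?_, ?_⟩
    · refine le_trans (Polynomial.natDegree_pow_le) ?_
      have h1 : (Polynomial.C b⁻¹ * (Polynomial.C b - (X + Polynomial.C lam))).natDegree ≤ 1 := by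
        refine le_trans (Polynomial.natDegree_mul_le) ?_
        simp only [Polynomial.natDegree_C, zero_add]
        refine le_trans (Polynomial.natDegree_sub_le _ _) ?_
        simp [Polynomial.natDegree_add_le]
      calc m * (Polynomial.C b⁻¹ * (Polynomial.C b - (X + Polynomial.C lam))).natDegree
          ≤ m * 1 := Nat.mul_le_mul_left m h1
        _ = m := mul_one m
    · simp [Polynomial.eval_pow, inv_mul_cancel₀ (ne_of_gt hb), one_pow]
    · intro x h1 h2
      have hx : x + lam = b := le_antisymm h2 (heq ▸ h1)
      have hz : Polynomial.eval x ((Polynomial.C b⁻¹ * (Polynomial.C b - (X + Polynomial.C lam))) ^ m) = 0 := by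
        rw [Polynomial.eval_pow]
        have h0 : Polynomial.eval x (Polynomial.C b⁻¹ * (Polynomial.C b - (X + Polynomial.C lam))) = 0 := by
          simp only [Polynomial.eval_mul, Polynomial.eval_C, Polynomial.eval_sub,
            Polynomial.eval_add, Polynomial.eval_X]
          rw [show b - (x + lam) = 0 by rw [hx]; ring, mul_zero]
        rw [h0, zero_pow (by omega)]
      rw [hz, abs_zero]
      have hba : b / a = 1 := by rw [← heq, div_self (ne_of_gt ha)]
      rw [hba]
      simp [Real.sqrt_one, zero_pow (by omega : m ≠ 0)]
  · -- a < b
    set κ := b / a with hκdef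
    have hκ1 : 1 < κ := (one_lt_div ha).mpr hlt
    have hκ0 : 0 < κ := lt_trans zero_lt_one hκ1
    set r : ℝ := Real.sqrt κ with hr
    have hr1 : 1 < r := by
      rw [hr, show (1:ℝ) = Real.sqrt 1 by simp]
      exact Real.sqrt_lt_sqrt zero_le_one hκ1
    have hsq : r ^ 2 = κ := Real.sq_sqrt (le_of_lt hκ0)
    set t : ℝ := (r + 1) / (r - 1) with ht
    have hrm : 0 < r - 1 := by linarith
    have hrp : 0 < r + 1 := by linarith
    have ht1 : 1 < t := by rw [ht, lt_div_iff₀ hrm]; linarith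
    have htpos : 0 < t := by linarith
    set u : ℝ := Real.log t with hu
    have hba : 0 < b - a := by linarith
    have hcosh : Real.cosh u = (b + a) / (b - a) := by
      rw [hu, Real.cosh_log htpos, ht, inv_div]
      have hκm : 0 < κ - 1 := by linarith
      have hκa : κ * a = b := by rw [hκdef]; field_simp
      have h2 : (b + a) / (b - a) = (κ + 1) / (κ - 1) := by
        rw [div_eq_div_iff (ne_of_gt hba) (ne_of_gt hκm)]
        linear_combination 2 * hκa
      rw [h2, ← hsq]
      have h4 : r ^ 2 - 1 ≠ 0 := by nlinarith
      field_simp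
      ring
    set Tm : ℝ := Real.cosh (m * u) with hTm
    have hTmpos : 0 < Tm := Real.cosh_pos _
    set ℓ : ℝ[X] := Polynomial.C ((b+a)/(b-a)) - Polynomial.C (2/(b-a)) * (X + Polynomial.C lam)
      with hℓ
    have hℓdeg : ℓ.natDegree ≤ 1 := by
      rw [hℓ]
      refine le_trans (Polynomial.natDegree_sub_le _ _) ?_
      simp only [Polynomial.natDegree_C, max_le_iff]
      constructor
      · omega
      · refine le_trans (Polynomial.natDegree_mul_le) ?_
        simp only [Polynomial.natDegree_C, zero_add]
        refine le_trans (Polynomial.natDegree_add_le _ _) ?_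
        simp [Polynomial.natDegree_X]
    have hℓeval : ∀ x : ℝ, ℓ.eval x = (b + a - 2*(x + lam)) / (b - a) := by
      intro x
      rw [hℓ]
      simp only [Polynomial.eval_sub, Polynomial.eval_C, Polynomial.eval_mul,
        Polynomial.eval_add, Polynomial.eval_X]
      field_simp
    refine ⟨Polynomial.C Tm⁻¹ * ((Polynomial.Chebyshev.T ℝ (m:ℤ)).comp ℓ), ?_, ?_, ?_⟩
    · refine le_trans (Polynomial.natDegree_mul_le) ?_
      simp only [Polynomial.natDegree_C, zero_add]
      refine le_trans (Polynomial.natDegree_comp_le) ?_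
      calc (Polynomial.Chebyshev.T ℝ (m:ℤ)).natDegree * ℓ.natDegree
          ≤ m * 1 := Nat.mul_le_mul (natDegree_cheb_le m) hℓdeg
        _ = m := mul_one m
    · rw [Polynomial.eval_mul, Polynomial.eval_C, Polynomial.eval_comp]
      rw [hℓeval, show b + a - 2*(-lam + lam) = b + a by ring, ← hcosh, cheb_cosh]
      rw [hTm]
      rw [show ((m:ℤ):ℝ) = (m:ℝ) by push_cast; ring]
      exact inv_mul_cancel₀ (ne_of_gt hTmpos)
    · intro x h1 h2
      rw [Polynomial.eval_mul, Polynomial.eval_C, Polynomial.eval_comp, abs_mul]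
      have habs : |ℓ.eval x| ≤ 1 := by
        rw [hℓeval, abs_div, abs_of_pos hba, div_le_one hba, abs_le]
        constructor <;> linarith
      have hTb := cheb_bdd (m:ℤ) _ habs
      have hexp : Real.exp (m * u) = t ^ m := by
        rw [Real.exp_nat_mul, hu, Real.exp_log htpos]
      have hTmge : t ^ m / 2 ≤ Tm := by
        rw [hTm, Real.cosh_eq, ← hexp]
        have := Real.exp_pos (-(m * u))
        linarith
      have htm : 0 < t ^ m := pow_pos htpos m
      have hinv : Tm⁻¹ ≤ 2 * ((Real.sqrt (b/a) - 1)/(Real.sqrt (b/a) + 1)) ^ m := by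
        have hθ : (Real.sqrt (b/a) - 1)/(Real.sqrt (b/a) + 1) = t⁻¹ := by
          rw [← hκdef, ← hr, ht, inv_div]
        rw [hθ, inv_pow]
        have : Tm⁻¹ ≤ (t ^ m / 2)⁻¹ := by
          exact inv_anti₀ (by positivity) hTmge
        refine le_trans this ?_
        rw [inv_div, div_eq_mul_inv]
      calc |Tm⁻¹| * |Polynomial.eval (ℓ.eval x) (Polynomial.Chebyshev.T ℝ (m:ℤ))|
          ≤ |Tm⁻¹| * 1 := by
            exact mul_le_mul_of_nonneg_left hTb (abs_nonneg _)
        _ = Tm⁻¹ := by rw [mul_one, abs_of_pos (by positivity)]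
        _ ≤ _ := hinv


/-- If `y = (y₁; y₂)` is a unit-norm eigenvector of `M = [[−A, ggᵀ/Δ²], [I, −A]]` for the
eigenvalue `λ_opt ≥ 0` with `A + λ_opt I ≻ 0`, then with
`κ = (α₁ + λ_opt)/(α_n + λ_opt)`, for every `k ≥ 0`,
`dist(y₁, K_k(g,A)) ≤ 2 ‖y₁‖ ((√κ − 1)/(√κ + 1))^{k+1}`. -/
theorem stmt_19 {n : ℕ} (A : Matrix (Fin n) (Fin n) ℝ) (hA : A.IsSymm)
    (α₁ αn : ℝ)
    (hα₁ : (∃ v : Fin n → ℝ, v ≠ 0 ∧ A.mulVec v = α₁ • v) ∧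
      ∀ (μ : ℝ) (v : Fin n → ℝ), v ≠ 0 → A.mulVec v = μ • v → μ ≤ α₁)
    (hαn : (∃ v : Fin n → ℝ, v ≠ 0 ∧ A.mulVec v = αn • v) ∧
      ∀ (μ : ℝ) (v : Fin n → ℝ), v ≠ 0 → A.mulVec v = μ • v → αn ≤ μ)
    (g : Fin n → ℝ) (hg : g ≠ 0) (Δ : ℝ) (hΔ : 0 < Δ)
    (lamopt : ℝ) (h2 : 0 ≤ lamopt)
    (hpd : (A + lamopt • (1 : Matrix (Fin n) (Fin n) ℝ)).PosDef)
    (κ : ℝ) (hκ : κ = (α₁ + lamopt) / (αn + lamopt))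
    (M : Matrix (Fin n ⊕ Fin n) (Fin n ⊕ Fin n) ℝ)
    (hM : M = Matrix.fromBlocks (-A) ((Δ ^ 2)⁻¹ • Matrix.vecMulVec g g) 1 (-A))
    (y₁ y₂ : Fin n → ℝ)
    (heig : M.mulVec (Sum.elim y₁ y₂) = lamopt • Sum.elim y₁ y₂)
    (hy : _root_.enorm (Sum.elim y₁ y₂) = 1) :
    ∀ k : ℕ,
      kdist A g k y₁ ≤
        2 * _root_.enorm y₁ * ((Real.sqrt κ - 1) / (Real.sqrt κ + 1)) ^ (k + 1) := by
  intro k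
  -- block equations
  subst hM
  rw [Matrix.fromBlocks_mulVec] at heig
  have h1 : (-A) *ᵥ y₁ + ((Δ^2)⁻¹ • Matrix.vecMulVec g g) *ᵥ y₂ = lamopt • y₁ := by
    funext i
    have := congr_fun heig (Sum.inl i)
    simpa using this
  have hvmv : (Matrix.vecMulVec g g) *ᵥ y₂ = (g ⬝ᵥ y₂) • g := by
    funext i
    simp only [Matrix.mulVec, Matrix.vecMulVec_apply, dotProduct,
      Pi.smul_apply, smul_eq_mul, Finset.sum_mul]
    exact Finset.sum_congr rfl fun j _ => by ring
  set c : ℝ := (Δ^2)⁻¹ * (g ⬝ᵥ y₂) with hc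
  have hkey : (A + lamopt • (1 : Matrix (Fin n) (Fin n) ℝ)) *ᵥ y₁ = c • g := by
    have hrw : ((Δ^2)⁻¹ • Matrix.vecMulVec g g) *ᵥ y₂ = c • g := by
      rw [Matrix.smul_mulVec, hvmv, smul_smul, hc]
    rw [hrw] at h1
    rw [Matrix.add_mulVec, Matrix.smul_mulVec, Matrix.one_mulVec]
    funext i
    have h1i := congr_fun h1 i
    rw [Matrix.neg_mulVec] at h1i
    simp only [Pi.add_apply, Pi.neg_apply, Pi.smul_apply, smul_eq_mul] at h1i ⊢
    linarith
  -- spectral setup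
  have hH : A.IsHermitian := hA
  have hBnz : ∀ i, ⇑(hH.eigenvectorBasis i) ≠ (0 : Fin n → ℝ) := by
    intro i h
    refine hH.eigenvectorBasis.orthonormal.ne_zero i ?_
    exact (WithLp.equiv 2 (Fin n → ℝ)).injective h
  have hμlo : ∀ i, αn ≤ hH.eigenvalues i := fun i =>
    hαn.2 _ _ (hBnz i) (hH.mulVec_eigenvectorBasis i)
  have hμhi : ∀ i, hH.eigenvalues i ≤ α₁ := fun i =>
    hα₁.2 _ _ (hBnz i) (hH.mulVec_eigenvectorBasis i)
  -- positivity
  set a : ℝ := αn + lamopt with hadef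
  set b : ℝ := α₁ + lamopt with hbdef
  obtain ⟨v, hv0, hveq⟩ := hαn.1
  have hvv : 0 < v ⬝ᵥ v := by
    rcases lt_or_eq_of_le (Finset.sum_nonneg fun i _ => mul_self_nonneg (v i)) with h | h
    · exact h
    · exact absurd (dotProduct_self_eq_zero.mp h.symm) hv0
  have hpdv := hpd.dotProduct_mulVec_pos hv0
  have hAv : (A + lamopt • (1 : Matrix (Fin n) (Fin n) ℝ)) *ᵥ v = a • v := by
    rw [Matrix.add_mulVec, Matrix.smul_mulVec, Matrix.one_mulVec, hveq, hadef,
      add_smul]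
  have ha : 0 < a := by
    rw [hAv, star_trivial, dotProduct_smul, smul_eq_mul] at hpdv
    nlinarith
  have hab : a ≤ b := by
    have := hα₁.2 αn v hv0 hveq
    rw [hadef, hbdef]; linarith
  have hba : b / a = κ := by rw [hκ, hadef, hbdef]
  -- Chebyshev polynomial
  obtain ⟨s, hdeg, heval1, hbnd⟩ := cheb_exists a b lamopt ha hab (k+1) (by omega)
  -- factor
  have hroot : (s - 1).IsRoot (-lamopt) := by
    simp [Polynomial.IsRoot, heval1]
  set q : ℝ[X] := (s - 1) /ₘ (X - Polynomial.C (-lamopt)) with hq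
  have hfac : (X - Polynomial.C (-lamopt)) * q = s - 1 :=
    (Polynomial.mul_divByMonic_eq_iff_isRoot).mpr hroot
  have hqdeg : q.natDegree ≤ k := by
    rw [hq, Polynomial.natDegree_divByMonic _ (Polynomial.monic_X_sub_C _),
      Polynomial.natDegree_X_sub_C]
    have hs1 : (s - 1).natDegree ≤ k + 1 := by
      refine le_trans (Polynomial.natDegree_sub_le _ _) ?_
      simp only [Polynomial.natDegree_one, max_le_iff]
      exact ⟨hdeg, by omega⟩
    omega
  set p : ℝ[X] := -q with hp
  have hXC : X - Polynomial.C (-lamopt) = X + Polynomial.C lamopt := by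
    rw [map_neg, sub_neg_eq_add]
  rw [hXC] at hfac
  have hs : s = 1 - (X + Polynomial.C lamopt) * p := by
    rw [hp]
    linear_combination -hfac
  have hpdeg : p.natDegree ≤ k := by rw [hp, Polynomial.natDegree_neg]; exact hqdeg
  set w : Fin n → ℝ := c • ((Polynomial.aeval A p).mulVec g) with hw
  have hwmem : w ∈ krylov A g k := Submodule.smul_mem _ _ (mem_krylov A g p hpdeg)
  -- y₁ - w = s(A) y₁
  have hyw : (Polynomial.aeval A s).mulVec y₁ = y₁ - w := by
    have e1 : Polynomial.aeval A s
        = 1 - (Polynomial.aeval A p) * (A + lamopt • (1 : Matrix (Fin n) (Fin n) ℝ)) := by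
      rw [hs, map_sub, _root_.map_one]
      rw [show (X + Polynomial.C lamopt) * p = p * (X + Polynomial.C lamopt) from mul_comm _ _]
      rw [_root_.map_mul]
      congr 1
      rw [_root_.map_add, Polynomial.aeval_X, Polynomial.aeval_C,
        Algebra.algebraMap_eq_smul_one]
    rw [e1, Matrix.sub_mulVec, Matrix.one_mulVec, ← Matrix.mulVec_mulVec, hkey,
      Matrix.mulVec_smul, hw]
  -- the uniform bound
  set θ : ℝ := (Real.sqrt κ - 1) / (Real.sqrt κ + 1) with hθ
  have hκ1 : 1 ≤ κ := by rw [← hba]; exact (one_le_div ha).mpr hab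
  have hsκ : 1 ≤ Real.sqrt κ := by
    rw [show (1:ℝ) = Real.sqrt 1 by simp]
    exact Real.sqrt_le_sqrt hκ1
  have hθ0 : 0 ≤ θ := div_nonneg (by linarith) (by linarith)
  set C : ℝ := 2 * θ ^ (k+1) with hC
  have hC0 : 0 ≤ C := by positivity
  have hCb : ∀ i, |s.eval (hH.eigenvalues i)| ≤ C := by
    intro i
    have := hbnd (hH.eigenvalues i) (by rw [hadef]; linarith [hμlo i])
      (by rw [hbdef]; linarith [hμhi i])
    rwa [hba] at this
  have hspec := spec_bound hH s C hC0 hCb y₁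
  rw [hyw] at hspec
  -- conclude
  have hmem : _root_.enorm (y₁ - w) ∈ {r : ℝ | ∃ w' ∈ krylov A g k, r = _root_.enorm (y₁ - w')} :=
    ⟨w, hwmem, rfl⟩
  have hbdd : BddBelow {r : ℝ | ∃ w' ∈ krylov A g k, r = _root_.enorm (y₁ - w')} := by
    refine ⟨0, fun r hr => ?_⟩
    obtain ⟨w', _, hr⟩ := hr
    rw [hr]
    exact norm_nonneg _
  calc kdist A g k y₁ ≤ _root_.enorm (y₁ - w) := csInf_le hbdd hmem
    _ ≤ C * _root_.enorm y₁ := hspec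
    _ = 2 * _root_.enorm y₁ * θ ^ (k+1) := by rw [hC]; ring
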